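/- arXiv:2003.04011 — 4 statements merged into one kernel-verified Lean document; each statement's English description precedes it below -/
import Mathlib

section
/- Let G be a finite simple graph, X ⊆ V(G), let S ⊂ V(G) be a separator of G, and let F be an X-free S-fragment of G. Let G′ be the graph obtained from the induced subgraph G[F̄ ∪ S], where F̄ = V(G − S) \ F, by adding all possible edges between vertices of S (if not already present). Then κ_{G′}(X) ≥ κ_G(X). -/
/-!
Every `X`-separator `T` of `G'` is already an `X`-separator of `G`. Indeed, follow a walk of
`G - T` between two vertices of `X` (which lie outside `F`): each excursion into `F` enters and
leaves it through vertices of `S`, and in `G'` these are adjacent, so the excursion can be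
short-cut to give a walk of `G' - T` with the same ends. Hence `G'` has fewer `X`-separators
than `G`, and `κ_{G'}(X) ≥ κ_G(X)`.
-/

open SimpleGraph

variable {V : Type*} {W : Type*}

/-- `S` is an `X`-separator of `G`: at least two components of `G - S`
contain a vertex of `X`. -/
def SepSet (G : SimpleGraph V) (X S : Set V) : Prop :=
  ∃ (x y : V) (hx : x ∈ X ∧ x ∉ S) (hy : y ∈ X ∧ y ∉ S),
    ¬ (G.induce Sᶜ).Reachable ⟨x, hx.2⟩ ⟨y, hy.2⟩

/-- `κ_G(X)`: the largest `k ≤ |X| - 1` such that every `X`-separator of `G`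
has at least `k` vertices. -/
noncomputable def graphKappa (G : SimpleGraph V) (X : Set V) : ℕ :=
  sSup {k : ℕ | k ≤ X.ncard - 1 ∧ ∀ S : Set V, SepSet G X S → k ≤ S.ncard}

/-- `F` is an `S`-fragment of `G`: a union of the vertex sets of at least one
but not all components of `G - S`. -/
def IsFragment (G : SimpleGraph V) (S F : Set V) : Prop :=
  F.Nonempty ∧ Disjoint F S ∧ (Sᶜ \ F).Nonempty ∧
    ∀ a ∈ F, ∀ b, G.Adj a b → b ∉ S → b ∈ F

/-- `B` is an `S`-`X`-fragment of `G`: an `S`-fragment such that both `B` and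
its complementary fragment `Sᶜ \ B` contain a vertex of `X`. -/
def IsXFragment (G : SimpleGraph V) (X S B : Set V) : Prop :=
  IsFragment G S B ∧ (B ∩ X).Nonempty ∧ ((Sᶜ \ B) ∩ X).Nonempty

theorem graphKappa_le_graphKappa_of_sepSet {G H : SimpleGraph V} {X : Set V}
    (h : ∀ T, SepSet H X T → SepSet G X T) : graphKappa G X ≤ graphKappa H X :=
  csSup_le_csSup ⟨X.ncard - 1, fun _ hk => hk.1⟩ ⟨0, Nat.zero_le _, fun _ _ => Nat.zero_le _⟩
    fun _ ⟨hk, hsep⟩ => ⟨hk, fun T hT => hsep T (h T hT)⟩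

namespace IsFragment

variable {G G' : SimpleGraph V} {S F : Set V}

theorem notMem_of_mem_sep (hF : IsFragment G S F) {a : V} (ha : a ∈ S) : a ∉ F :=
  fun haF => hF.2.1.le_bot ⟨haF, ha⟩

theorem mem_sep_of_adj (hF : IsFragment G S F) {a b : V} (ha : a ∈ F) (hb : b ∉ F)
    (hab : G.Adj a b) : b ∈ S := by
  by_contra hbS
  exact hb (hF.2.2.2 a ha b hab hbS)

theorem reachable_of_walk (hF : IsFragment G S F)
    (hG' : ∀ a b : V, G'.Adj a b ↔
      (a ≠ b ∧ a ∉ F ∧ b ∉ F ∧ (G.Adj a b ∨ (a ∈ S ∧ b ∈ S))))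
    {T : Set V} {u v : ↥Tᶜ} (w : (G.induce Tᶜ).Walk u v) (hv : (v : V) ∉ F) :
    ((u : V) ∉ F → (G'.induce Tᶜ).Reachable u v) ∧
      ((u : V) ∈ F → ∃ c : ↥Tᶜ, (c : V) ∈ S ∧ (G'.induce Tᶜ).Reachable c v) := by
  induction w with
  | nil => exact ⟨fun _ => .refl _, fun hu => absurd hu hv⟩
  | @cons a b c hab w ih =>
    have hab : G.Adj a b := hab
    refine ⟨fun ha => ?_, fun ha => ?_⟩
    · by_cases hb : (b : V) ∈ F
      · have haS : (a : V) ∈ S := hF.mem_sep_of_adj hb ha hab.symm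
        obtain ⟨d, hdS, hdv⟩ := (ih hv).2 hb
        obtain rfl | had := eq_or_ne a d
        · exact hdv
        have hadj : (G'.induce Tᶜ).Adj a d :=
          (hG' a d).2 ⟨Subtype.coe_injective.ne had, ha, hF.notMem_of_mem_sep hdS,
            .inr ⟨haS, hdS⟩⟩
        exact hadj.reachable.trans hdv
      · have hadj : (G'.induce Tᶜ).Adj a b := (hG' a b).2 ⟨hab.ne, ha, hb, .inl hab⟩
        exact hadj.reachable.trans ((ih hv).1 hb)
    · by_cases hb : (b : V) ∈ F
      · exact (ih hv).2 hb
      · exact ⟨b, hF.mem_sep_of_adj ha hb hab, (ih hv).1 hb⟩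

theorem sepSet_of_sepSet (hF : IsFragment G S F)
    (hG' : ∀ a b : V, G'.Adj a b ↔
      (a ≠ b ∧ a ∉ F ∧ b ∉ F ∧ (G.Adj a b ∨ (a ∈ S ∧ b ∈ S))))
    {X T : Set V} (hfree : Disjoint F X) (hT : SepSet G' X T) : SepSet G X T := by
  obtain ⟨x, y, hx, hy, hxy⟩ := hT
  refine ⟨x, y, hx, hy, fun ⟨w⟩ => hxy ?_⟩
  exact (hF.reachable_of_walk hG' w (hfree.notMem_of_mem_right hy.1)).1
    (hfree.notMem_of_mem_right hx.1)

end IsFragment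

theorem kappa_fragment_complete_general {V : Type*} (G : SimpleGraph V)
    (X : Set V) (S F : Set V)
    (hF : IsFragment G S F) (hfree : Disjoint F X)
    (G' : SimpleGraph V)
    (hG' : ∀ a b : V, G'.Adj a b ↔
      (a ≠ b ∧ a ∉ F ∧ b ∉ F ∧ (G.Adj a b ∨ (a ∈ S ∧ b ∈ S)))) :
    graphKappa G X ≤ graphKappa G' X :=
  graphKappa_le_graphKappa_of_sepSet fun _ => hF.sepSet_of_sepSet hG' hfree

/-- Lemma: let `G` be a finite simple graph, `X ⊆ V(G)`, `S` a separator of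
`G` and `F` an `X`-free `S`-fragment of `G`.  If `G'` is obtained from the
induced subgraph `G[F̄ ∪ S]` by adding all edges between vertices of `S`
(here realized on the ambient vertex type, the vertices of `F` becoming
isolated), then `κ_{G'}(X) ≥ κ_G(X)`. -/
theorem kappa_fragment_complete {V : Type*} [Fintype V] (G : SimpleGraph V)
    (X : Set V) (S F : Set V) (hS : SepSet G Set.univ S)
    (hF : IsFragment G S F) (hfree : Disjoint F X)
    (G' : SimpleGraph V)
    (hG' : ∀ a b : V, G'.Adj a b ↔
      (a ≠ b ∧ a ∉ F ∧ b ∉ F ∧ (G.Adj a b ∨ (a ∈ S ∧ b ∈ S)))) :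
    graphKappa G X ≤ graphKappa G' X :=
  kappa_fragment_complete_general G X S F hF hfree G' hG'
end

section
/- Let G be a finite simple graph, X ⊆ V(G), and let vy be an X-legal edge of G. Then κ_{G/vy}(X) ≥ κ_G(X) − 1; moreover, κ_{G/vy}(X) = κ_G(X) − 1 holds if and only if there exists an X-separator of G of size κ_G(X) containing both v and y. -/
/-!
Separators of `G/vy` and of `G` correspond up to the vertex `y`, which `G/vy` leaves isolated
and which is not in `X`. A separator of `G/vy` avoiding `v` stays one of `G` once `y` is dropped
(paths through `y` are rerouted through `v`), and one containing `v` becomes one of `G` once `y`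
is added; only the latter costs a vertex, and it yields a separator containing both `v` and `y`.
Conversely, a separator of `G` containing `v` and `y` still separates `X` in `G/vy` after
dropping `y`.
-/

open SimpleGraph

variable {V : Type*} {W : Type*}

/-- `G/vy`: the graph obtained from `G` by contracting the edge `vy` into `v`,
i.e. `y` is removed (it becomes an isolated vertex of the ambient type) and an
edge `vz` is added for every `z` with `yz ∈ E(G)` and `vz ∉ E(G)`. -/
def contractEdge (G : SimpleGraph V) (v y : V) : SimpleGraph V where
  Adj a b := a ≠ y ∧ b ≠ y ∧ a ≠ b ∧
    (G.Adj a b ∨ (a = v ∧ G.Adj y b) ∨ (b = v ∧ G.Adj a y))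
  symm := by
    constructor
    rintro a b ⟨ha, hb, hab, h⟩
    refine ⟨hb, ha, hab.symm, ?_⟩
    rcases h with h | ⟨rfl, h⟩ | ⟨rfl, h⟩
    · exact Or.inl h.symm
    · exact Or.inr (Or.inr ⟨rfl, h.symm⟩)
    · exact Or.inr (Or.inl ⟨rfl, h.symm⟩)
  loopless := by constructor; rintro a ⟨_, _, h, _⟩; exact h rfl

lemma SimpleGraph.Reachable.induce_of_map {G H : SimpleGraph V} {T U : Set V} (f : V → V)
    (hf : ∀ a ∈ T, f a ∈ U)
    (hadj : ∀ a ∈ T, ∀ b ∈ T, G.Adj a b → f a = f b ∨ H.Adj (f a) (f b)) {u w : T}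
    (h : (G.induce T).Reachable u w) :
    (H.induce U).Reachable ⟨f u, hf u u.2⟩ ⟨f w, hf w w.2⟩ := by
  rw [reachable_iff_reflTransGen] at h ⊢
  refine Relation.ReflTransGen.lift' (p := (H.induce U).Adj) (fun a : T => ⟨f a, hf a a.2⟩)
    (fun a b hab => ?_) u w h
  rcases hadj a a.2 b b.2 hab with heq | hadj'
  · have hab' : (⟨f a, hf a a.2⟩ : U) = ⟨f b, hf b b.2⟩ := Subtype.ext heq
    show Relation.ReflTransGen (H.induce U).Adj ⟨f a, hf a a.2⟩ ⟨f b, hf b b.2⟩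
    exact hab' ▸ .refl
  · exact .single hadj'

lemma SepSet.of_map {G H : SimpleGraph V} {X S T : Set V} (f : V → V) (hXT : X ∩ T ⊆ S)
    (hfX : ∀ x ∈ X, f x = x) (hf : ∀ a ∉ T, f a ∉ S)
    (hadj : ∀ a ∉ T, ∀ b ∉ T, G.Adj a b → f a = f b ∨ H.Adj (f a) (f b))
    (h : SepSet H X S) : SepSet G X T := by
  obtain ⟨x, x', ⟨hx, hxS⟩, ⟨hx', hx'S⟩, hnr⟩ := h
  refine ⟨x, x', ⟨hx, fun hxT => hxS (hXT ⟨hx, hxT⟩)⟩, ⟨hx', fun hxT => hx'S (hXT ⟨hx', hxT⟩)⟩,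
    fun hr => hnr ?_⟩
  simpa only [hfX x hx, hfX x' hx'] using hr.induce_of_map f hf hadj

section Kappa

variable {G : SimpleGraph V} {X S : Set V}

lemma graphKappa_mem (G : SimpleGraph V) (X : Set V) :
    graphKappa G X ∈ {k : ℕ | k ≤ X.ncard - 1 ∧ ∀ S : Set V, SepSet G X S → k ≤ S.ncard} :=
  Nat.sSup_mem ⟨0, by simp⟩ ⟨X.ncard - 1, fun _ hk => hk.1⟩

lemma graphKappa_le_ncard_sub_one (G : SimpleGraph V) (X : Set V) :
    graphKappa G X ≤ X.ncard - 1 :=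
  (graphKappa_mem G X).1

lemma SepSet.graphKappa_le_ncard (h : SepSet G X S) : graphKappa G X ≤ S.ncard :=
  (graphKappa_mem G X).2 S h

lemma le_graphKappa {k : ℕ} (hX : k ≤ X.ncard - 1) (hS : ∀ S, SepSet G X S → k ≤ S.ncard) :
    k ≤ graphKappa G X :=
  le_csSup ⟨X.ncard - 1, fun _ hj => hj.1⟩ ⟨hX, hS⟩

end Kappa

section Contract

variable {G : SimpleGraph V} {X S : Set V} {v y : V}

/-- Pull back along the map sending `y` to `v`. -/
lemma SepSet.diff_singleton_of_contractEdge (hvy : v ≠ y) (hy : y ∉ X)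
    (hS : SepSet (contractEdge G v y) X S) (hv : v ∉ S) : SepSet G X (S \ {y}) := by
  classical
  refine hS.of_map (fun a => if a = y then v else a) (fun x hx => hx.2.1)
    (fun x hx => if_neg (ne_of_mem_of_not_mem hx hy)) (fun a ha => ?_) fun a _ b _ hab => ?_
  · by_cases hay : a = y
    · simpa [hay] using hv
    · simpa [hay] using ha
  · by_cases hay : a = y
    · have hby : b ≠ y := hay ▸ hab.ne'
      rw [if_pos hay, if_neg hby]
      rcases eq_or_ne b v with hbv | hbv
      · exact .inl hbv.symm
      · exact .inr ⟨hvy, hby, hbv.symm, .inr (.inl ⟨rfl, hay ▸ hab⟩)⟩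
    · rw [if_neg hay]
      by_cases hby : b = y
      · rw [if_pos hby]
        rcases eq_or_ne a v with hav | hav
        · exact .inl hav
        · exact .inr ⟨hay, hvy, hav, .inr (.inr ⟨rfl, hby ▸ hab⟩)⟩
      · rw [if_neg hby]
        exact .inr ⟨hay, hby, hab.ne, .inl hab⟩

lemma SepSet.insert_of_contractEdge (hy : y ∉ X) (hS : SepSet (contractEdge G v y) X S) :
    SepSet G X (insert y S) := by
  refine hS.of_map id (fun x hx => ?_) (fun _ _ => rfl) (fun a ha => ?_) fun a ha b hb hab => ?_
  · exact hx.2.resolve_left (ne_of_mem_of_not_mem hx.1 hy)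
  · exact fun haS => ha (Set.mem_insert_of_mem y haS)
  · simp only [Set.mem_insert_iff, not_or] at ha hb
    exact .inr ⟨ha.1, hb.1, hab.ne, .inl hab⟩

/-- Pull back along the map sending the isolated vertex `y` to a vertex `x ∈ X \ S`. -/
lemma SepSet.contractEdge_diff_singleton (hy : y ∉ X) (hS : SepSet G X S) (hv : v ∈ S) :
    SepSet (contractEdge G v y) X (S \ {y}) := by
  classical
  obtain ⟨x, -, ⟨-, hxS⟩, -⟩ := id hS
  refine hS.of_map (fun a => if a = y then x else a) (fun x hx => hx.2.1)
    (fun x' hx' => if_neg (ne_of_mem_of_not_mem hx' hy)) (fun a ha => ?_) fun a ha b hb hab => ?_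
  · by_cases hay : a = y
    · simpa [hay] using hxS
    · simpa [hay] using ha
  · obtain ⟨hay, hby, -, hab⟩ := hab
    have haS : a ∉ S := fun h => ha ⟨h, hay⟩
    have hbS : b ∉ S := fun h => hb ⟨h, hby⟩
    rcases hab with hab | ⟨rfl, -⟩ | ⟨rfl, -⟩
    · simp only [if_neg hay, if_neg hby]
      exact .inr hab
    · exact absurd hv haS
    · exact absurd hv hbS

lemma exists_sepSet_of_sepSet_contractEdge (hvy : v ≠ y) (hy : y ∉ X)
    (hS : SepSet (contractEdge G v y) X S) :
    ∃ T, SepSet G X T ∧ (T.ncard ≤ S.ncard ∨ v ∈ T ∧ y ∈ T ∧ T.ncard ≤ S.ncard + 1) := by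
  by_cases hv : v ∈ S
  · exact ⟨insert y S, hS.insert_of_contractEdge hy,
      .inr ⟨Set.mem_insert_of_mem y hv, Set.mem_insert y S, Set.ncard_insert_le y S⟩⟩
  · exact ⟨S \ {y}, hS.diff_singleton_of_contractEdge hvy hy hv,
      .inl (Set.ncard_sdiff_singleton_le S y)⟩

lemma graphKappa_sub_one_le_graphKappa_contractEdge (hvy : v ≠ y) (hy : y ∉ X) :
    graphKappa G X - 1 ≤ graphKappa (contractEdge G v y) X := by
  refine le_graphKappa ((Nat.sub_le _ 1).trans (graphKappa_le_ncard_sub_one G X)) fun S hS => ?_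
  obtain ⟨T, hT, hcard⟩ := exists_sepSet_of_sepSet_contractEdge hvy hy hS
  have := hT.graphKappa_le_ncard
  omega

lemma graphKappa_le_graphKappa_contractEdge (hvy : v ≠ y) (hy : y ∉ X)
    (hno : ¬∃ S, SepSet G X S ∧ S.ncard = graphKappa G X ∧ v ∈ S ∧ y ∈ S) :
    graphKappa G X ≤ graphKappa (contractEdge G v y) X := by
  refine le_graphKappa (graphKappa_le_ncard_sub_one G X) fun S hS => ?_
  obtain ⟨T, hT, hT_le | ⟨hvT, hyT, hT_le⟩⟩ := exists_sepSet_of_sepSet_contractEdge hvy hy hS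
  · exact hT.graphKappa_le_ncard.trans hT_le
  · have := hT.graphKappa_le_ncard
    by_contra hlt
    exact hno ⟨T, hT, by omega, hvT, hyT⟩

lemma graphKappa_contractEdge_lt_ncard [Finite V] (hy : y ∉ X) (hS : SepSet G X S) (hv : v ∈ S)
    (hyS : y ∈ S) : graphKappa (contractEdge G v y) X < S.ncard :=
  (hS.contractEdge_diff_singleton hy hv).graphKappa_le_ncard.trans_lt
    (Set.ncard_sdiff_singleton_lt_of_mem hyS)

end Contract

/-- Claim: for an `X`-legal edge `vy` of a finite simple graph `G`,
`κ_{G/vy}(X) ≥ κ_G(X) - 1`, and `κ_{G/vy}(X) = κ_G(X) - 1` holds if and only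
if `G` has an `X`-separator of size `κ_G(X)` containing both `v` and `y`. -/
theorem kappa_contract {V : Type*} [Fintype V] (G : SimpleGraph V)
    (X : Set V) (v y : V) (hadj : G.Adj v y) (hy : y ∉ X) :
    (graphKappa G X : ℤ) - 1 ≤ (graphKappa (contractEdge G v y) X : ℤ) ∧
    ((graphKappa (contractEdge G v y) X : ℤ) = (graphKappa G X : ℤ) - 1 ↔
      ∃ S : Set V, SepSet G X S ∧ S.ncard = graphKappa G X ∧ v ∈ S ∧ y ∈ S) := by
  have hlower := graphKappa_sub_one_le_graphKappa_contractEdge (G := G) hadj.ne hy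
  refine ⟨by omega, fun heq => ?_, fun ⟨S, hS, hcard, hv, hyS⟩ => ?_⟩
  · by_contra hno
    have := graphKappa_le_graphKappa_contractEdge hadj.ne hy hno
    omega
  · have := graphKappa_contractEdge_lt_ncard hy hS hv hyS
    omega
end

section
/- Let S and S′ be separators of a finite simple graph G, let F be an S-fragment and F′ an S′-fragment, and set T(F,F′) := (F ∩ S′) ∪ (S′ ∩ S) ∪ (S ∩ F′). Then: (i) if F ∩ F′ ≠ ∅, then T(F,F′) is a separator of G separating F ∩ F′ from the remaining graph; (ii) |T(F,F′)| + |T(F̄,F̄′)| = |S| + |S′|, where F̄ = V(G − S) \ F and F̄′ = V(G − S′) \ F′. -/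
open SimpleGraph

variable {V : Type*} {W : Type*}

/-! The fragment `F ∩ F'` is closed under moving to neighbours outside `T(F,F')`: such a
neighbour `b` avoids `S` (otherwise it lies in `S ∩ F'` or `S' ∩ S`), hence lies in `F`, hence
avoids `S'` (otherwise it lies in `F ∩ S'`), hence lies in `F'`. Any fragment certifies that its
separator separates. For the count, `T(F,F') ∪ T(F̄,F̄') = S ∪ S'` and
`T(F,F') ∩ T(F̄,F̄') = S ∩ S'`, so inclusion–exclusion gives `|S| + |S'|`. -/

/-- The corner separator `T(F,F')`. -/
def cornerSep (S S' F F' : Set V) : Set V :=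
  (F ∩ S') ∪ (S' ∩ S) ∪ (S ∩ F')

namespace IsFragment

variable {G : SimpleGraph V} {S F : Set V}

lemma mem_of_reachable (hF : IsFragment G S F) {u v : ↥Sᶜ}
    (h : (G.induce Sᶜ).Reachable u v) (hu : (u : V) ∈ F) : (v : V) ∈ F := by
  obtain ⟨w⟩ := h
  induction w with
  | nil => exact hu
  | @cons _ b _ hadj _ ih => exact ih (hF.2.2.2 _ hu _ hadj b.2)

lemma sepSet_univ (hF : IsFragment G S F) : SepSet G Set.univ S := by
  obtain ⟨x, hxF⟩ := hF.1
  obtain ⟨y, hyS, hyF⟩ := hF.2.2.1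
  exact ⟨x, y, ⟨trivial, hF.2.1.notMem_of_mem_left hxF⟩, ⟨trivial, hyS⟩,
    fun hxy => hyF (hF.mem_of_reachable hxy hxF)⟩

lemma inter {S' F' : Set V} (hF : IsFragment G S F) (hF' : IsFragment G S' F')
    (hne : (F ∩ F').Nonempty) : IsFragment G (cornerSep S S' F F') (F ∩ F') := by
  have hFS := hF.2.1
  have hF'S' := hF'.2.1
  refine ⟨hne, ?_, ?_, ?_⟩
  · rw [Set.disjoint_left]
    rintro x ⟨hxF, hxF'⟩ ((⟨-, hxS'⟩ | ⟨hxS', -⟩) | ⟨hxS, -⟩)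
    · exact hF'S'.notMem_of_mem_left hxF' hxS'
    · exact hF'S'.notMem_of_mem_left hxF' hxS'
    · exact hFS.notMem_of_mem_left hxF hxS
  · obtain ⟨y, hyS, hyF⟩ := hF.2.2.1
    refine ⟨y, ?_, fun hy => hyF hy.1⟩
    rintro ((⟨hyF', -⟩ | ⟨-, hyS'⟩) | ⟨hyS', -⟩)
    · exact hyF hyF'
    · exact hyS hyS'
    · exact hyS hyS'
  · rintro a ⟨haF, haF'⟩ b hab hbT
    have hbS : b ∉ S := fun hbS => hbT <| by
      by_cases hbS' : b ∈ S'
      · exact Or.inl (Or.inr ⟨hbS', hbS⟩)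
      · exact Or.inr ⟨hbS, hF'.2.2.2 a haF' b hab hbS'⟩
    have hbF : b ∈ F := hF.2.2.2 a haF b hab hbS
    have hbS' : b ∉ S' := fun hbS' => hbT (Or.inl (Or.inl ⟨hbF, hbS'⟩))
    exact ⟨hbF, hF'.2.2.2 a haF' b hab hbS'⟩

end IsFragment

lemma ncard_cornerSep_add_ncard_cornerSep_compl [Finite V] {S S' F F' : Set V}
    (hFS : Disjoint F S) (hF'S' : Disjoint F' S') :
    (cornerSep S S' F F').ncard + (cornerSep S S' (Sᶜ \ F) (S'ᶜ \ F')).ncard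
      = S.ncard + S'.ncard := by
  have hunion : cornerSep S S' F F' ∪ cornerSep S S' (Sᶜ \ F) (S'ᶜ \ F') = S ∪ S' := by
    ext x
    have := hFS.notMem_of_mem_left (a := x)
    have := hF'S'.notMem_of_mem_left (a := x)
    simp only [cornerSep, Set.mem_union, Set.mem_inter_iff, Set.mem_sdiff, Set.mem_compl_iff]
    tauto
  have hinter : cornerSep S S' F F' ∩ cornerSep S S' (Sᶜ \ F) (S'ᶜ \ F') = S ∩ S' := by
    ext x
    have := hFS.notMem_of_mem_left (a := x)
    have := hF'S'.notMem_of_mem_left (a := x)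
    simp only [cornerSep, Set.mem_union, Set.mem_inter_iff, Set.mem_sdiff, Set.mem_compl_iff]
    tauto
  rw [← Set.ncard_union_add_ncard_inter, hunion, hinter, Set.ncard_union_add_ncard_inter]

theorem fragment_T_claim_general {V : Type*} [Fintype V] (G : SimpleGraph V)
    (S S' F F' : Set V)
    (hF : IsFragment G S F) (hF' : IsFragment G S' F') :
    ((F ∩ F').Nonempty →
      SepSet G Set.univ ((F ∩ S') ∪ (S' ∩ S) ∪ (S ∩ F')) ∧
      IsFragment G ((F ∩ S') ∪ (S' ∩ S) ∪ (S ∩ F')) (F ∩ F')) ∧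
    ((F ∩ S') ∪ (S' ∩ S) ∪ (S ∩ F')).ncard
        + (((Sᶜ \ F) ∩ S') ∪ (S' ∩ S) ∪ (S ∩ (S'ᶜ \ F'))).ncard
      = S.ncard + S'.ncard :=
  ⟨fun hne => ⟨(hF.inter hF' hne).sepSet_univ, hF.inter hF' hne⟩,
    ncard_cornerSep_add_ncard_cornerSep_compl hF.2.1 hF'.2.1⟩

/-- Claim: let `S, S'` be separators of a finite simple graph `G`, `F` an
`S`-fragment and `F'` an `S'`-fragment, and
`T(F,F') = (F ∩ S') ∪ (S' ∩ S) ∪ (S ∩ F')`.  Then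
(i) if `F ∩ F' ≠ ∅`, then `T(F,F')` is a separator of `G` separating `F ∩ F'`
from the remaining graph (i.e. `F ∩ F'` is a `T(F,F')`-fragment), and
(ii) `|T(F,F')| + |T(F̄,F̄')| = |S| + |S'|`. -/
theorem fragment_T_claim {V : Type*} [Fintype V] (G : SimpleGraph V)
    (S S' F F' : Set V)
    (hS : SepSet G Set.univ S) (hS' : SepSet G Set.univ S')
    (hF : IsFragment G S F) (hF' : IsFragment G S' F') :
    ((F ∩ F').Nonempty →
      SepSet G Set.univ ((F ∩ S') ∪ (S' ∩ S) ∪ (S ∩ F')) ∧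
      IsFragment G ((F ∩ S') ∪ (S' ∩ S) ∪ (S ∩ F')) (F ∩ F')) ∧
    ((F ∩ S') ∪ (S' ∩ S) ∪ (S ∩ F')).ncard
        + (((Sᶜ \ F) ∩ S') ∪ (S' ∩ S) ∪ (S ∩ (S'ᶜ \ F'))).ncard
      = S.ncard + S'.ncard :=
  fragment_T_claim_general G S S' F F' hF hF'
end

section
/- Let G be a finite simple 2-connected graph, X ⊆ V(G) with κ_G(X) ≥ 4, and let Q be a Tutte path of G. If X is not a subset of V(Q), then X ⊆ V(B) for some bridge B of Q, and in this case Q contains at most 3 vertices of X. -/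
open SimpleGraph

variable {V : Type*} {W : Type*}

/-- `K` is (the vertex set of) a component of `G - S`: nonempty, disjoint from
`S`, connected, and closed under adjacency outside `S`. -/
def IsCompOutside (G : SimpleGraph V) (S K : Set V) : Prop :=
  K.Nonempty ∧ Disjoint K S ∧ (G.induce K).Connected ∧
    ∀ a ∈ K, ∀ b, G.Adj a b → b ∉ S → b ∈ K

/-- The set of attachments of the (non-trivial) bridge determined by the
component `K` of `G - S`: the neighbours of `K` inside `S`. -/
def attachments (G : SimpleGraph V) (S K : Set V) : Set V :=
  {w | w ∈ S ∧ ∃ a ∈ K, G.Adj a w}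

/-- `Q` is a Tutte path of `G`: a path on at least two vertices such that
every (non-trivial) bridge of `Q` has at most three attachments. -/
def IsTuttePath (G : SimpleGraph V) {u v : V} (Q : G.Walk u v) : Prop :=
  Q.IsPath ∧ u ≠ v ∧
    ∀ K : Set V, IsCompOutside G {z | z ∈ Q.support} K →
      (attachments G {z | z ∈ Q.support} K).ncard ≤ 3

/-
Take `x ∈ X` off `Q` and let `K` be the component of `G - V(Q)` containing `x`. Every path
leaving `K` passes through an attachment of its bridge, so the attachment set `T` separates
`K` from everything outside `K ∪ T`. Since `Q` is a Tutte path, `|T| ≤ 3 < κ_G(X)`, so `T` is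
not an `X`-separator: hence `X ⊆ K ∪ T`, and the vertices of `X` on `Q` all lie in `T`.
-/

variable {G : SimpleGraph V}

lemma le_ncard_of_sepSet {X S : Set V} {k : ℕ} (hk : k ≤ graphKappa G X)
    (hS : SepSet G X S) : k ≤ S.ncard := by
  have hbdd : BddAbove {n : ℕ | n ≤ X.ncard - 1 ∧ ∀ S, SepSet G X S → n ≤ S.ncard} :=
    ⟨X.ncard - 1, fun _ hn => hn.1⟩
  have hne : {n : ℕ | n ≤ X.ncard - 1 ∧ ∀ S, SepSet G X S → n ≤ S.ncard}.Nonempty :=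
    ⟨0, Nat.zero_le _, fun _ _ => Nat.zero_le _⟩
  exact hk.trans ((Nat.sSup_mem hne hbdd).2 S hS)

namespace SimpleGraph.ComponentCompl

variable {S : Set V}

lemma connected_coeGraph (C : G.ComponentCompl S) : C.coeGraph.Connected :=
  C.connected_toSimpleGraph.map
    { toFun := fun v => ⟨v.1.1, v.1.2, v.2⟩, map_rel' := id }
    (fun w => ⟨⟨⟨w.1, w.2.1⟩, w.2.2⟩, rfl⟩)

lemma isCompOutside (C : G.ComponentCompl S) : IsCompOutside G S C :=
  ⟨C.nonempty, C.disjoint_right.symm, C.connected_coeGraph,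
    fun a ha b hab hb => C.mem_of_adj a b ha hb hab⟩

end SimpleGraph.ComponentCompl

lemma sepSet_attachments {S K X : Set V} (hK : IsCompOutside G S K) {x y : V}
    (hxX : x ∈ X) (hxK : x ∈ K) (hyX : y ∈ X) (hy : y ∉ K ∪ attachments G S K) :
    SepSet G X (attachments G S K) := by
  have hxT : x ∉ attachments G S K := fun h => hK.2.1.notMem_of_mem_left hxK h.1
  rw [Set.mem_union, not_or] at hy
  refine ⟨x, y, ⟨hxX, hxT⟩, ⟨hyX, hy.2⟩, fun ⟨p⟩ => ?_⟩
  obtain ⟨d, -, hd₁, hd₂⟩ := p.exists_boundary_dart {v | v.1 ∈ K} hxK hy.1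
  have hadj : G.Adj d.fst.1 d.snd.1 := d.adj
  by_cases hdS : d.snd.1 ∈ S
  · exact d.snd.2 ⟨hdS, d.fst.1, hd₁, hadj⟩
  · exact hd₂ (hK.2.2.2 _ hd₁ _ hadj hdS)

lemma subset_union_attachments {S K X : Set V} (hK : IsCompOutside G S K) {x : V}
    (hxX : x ∈ X) (hxK : x ∈ K) (hT : (attachments G S K).ncard < graphKappa G X) :
    X ⊆ K ∪ attachments G S K := fun _ hyX => by
  by_contra hy
  exact (le_ncard_of_sepSet le_rfl (sepSet_attachments hK hxX hxK hyX hy)).not_gt hT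

theorem bridge_lemma_general {V : Type*} (G : SimpleGraph V)
    (X : Set V) (hX : 4 ≤ graphKappa G X)
    {u v : V} (Q : G.Walk u v) (hQ : IsTuttePath G Q)
    (hns : ¬ ∀ x ∈ X, x ∈ Q.support) :
    (∃ K : Set V, IsCompOutside G {z | z ∈ Q.support} K ∧
        X ⊆ K ∪ attachments G {z | z ∈ Q.support} K) ∧
    {x | x ∈ X ∧ x ∈ Q.support}.ncard ≤ 3 := by
  push Not at hns
  obtain ⟨x, hxX, hxQ⟩ := hns
  set S : Set V := {z | z ∈ Q.support}
  let C := G.componentComplMk (K := S) hxQ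
  have hC : IsCompOutside G S C := C.isCompOutside
  have hT : (attachments G S C).ncard ≤ 3 := hQ.2.2 _ hC
  have hXC : X ⊆ C ∪ attachments G S C :=
    subset_union_attachments hC hxX (G.componentComplMk_mem hxQ) (by omega)
  have hXQ : {x | x ∈ X ∧ x ∈ Q.support} ⊆ attachments G S C := fun z ⟨hzX, hzQ⟩ =>
    (hXC hzX).resolve_left fun hzC => hC.2.1.notMem_of_mem_left hzC hzQ
  refine ⟨⟨C, hC, hXC⟩, ?_⟩
  calc {x | x ∈ X ∧ x ∈ Q.support}.ncard
      ≤ (attachments G S C).ncard :=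
        Set.ncard_le_ncard hXQ ((List.finite_toSet Q.support).subset fun _ hw => hw.1)
    _ ≤ 3 := hT

/-- Lemma: let `G` be a finite simple `2`-connected graph, `X ⊆ V(G)` with
`κ_G(X) ≥ 4`, and let `Q` be a Tutte path of `G`.  If `X ⊄ V(Q)`, then
`X ⊆ V(B)` for some bridge `B` of `Q` (where `V(B) = I(B) ∪ T(B)`), and in
this case `Q` contains at most `3` vertices of `X`. -/
theorem bridge_lemma {V : Type*} [Fintype V] (G : SimpleGraph V)
    (h2 : 2 ≤ graphKappa G Set.univ) (X : Set V) (hX : 4 ≤ graphKappa G X)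
    {u v : V} (Q : G.Walk u v) (hQ : IsTuttePath G Q)
    (hns : ¬ ∀ x ∈ X, x ∈ Q.support) :
    (∃ K : Set V, IsCompOutside G {z | z ∈ Q.support} K ∧
        X ⊆ K ∪ attachments G {z | z ∈ Q.support} K) ∧
    {x | x ∈ X ∧ x ∈ Q.support}.ncard ≤ 3 :=
  bridge_lemma_general G X hX Q hQ hns
end
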